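/- arXiv:2604.04417 — 2 statements merged into one kernel-verified Lean document; each statement's English description precedes it below -/
import Mathlib

section
/- Let (x, X) be feasible for the eigenvalue-relaxation problem: constraints x^T(Q^k−λ^k I)x + a_k^T x + λ^k Σ_i X_ii ≤ b_k for k = 1..m, Ax ≤ b^A, X_ii = x_i for i in a set ℐ, 0 ≤ X_ii ≤ u_i x_i for i ∉ ℐ, 0 ≤ x ≤ u, with λ^k ≤ 0 for all k. Define X̄ by X̄_ii := u_i x_i for i ∉ ℐ and X̄_ii := X_ii for i ∈ ℐ. Then (x, X̄) is also feasible, and its objective value x^T(Q⁰−λ⁰I)x + a₀^T x + b₀ + λ⁰ Σ_i X̄_ii is no greater than that of (x, X). -/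
open Matrix

/-- Fixing `X_ii := u_i x_i` on the continuous coordinates preserves feasibility
of the eigenvalue relaxation and does not increase the objective value. -/
theorem stmt_5 {n m m2 : ℕ}
    (Q : Fin (m + 1) → Matrix (Fin n) (Fin n) ℝ)
    (a : Fin (m + 1) → Fin n → ℝ) (b : Fin (m + 1) → ℝ)
    (lam : Fin (m + 1) → ℝ) (hlam : ∀ k, lam k ≤ 0)
    (A : Matrix (Fin m2) (Fin n) ℝ) (bA : Fin m2 → ℝ)
    (u : Fin n → ℝ) (hu : ∀ i, 0 ≤ u i)
    (I : Finset (Fin n)) (x X : Fin n → ℝ)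
    -- feasibility of (x, X):
    (hq : ∀ k, k ≠ 0 →
      x ⬝ᵥ ((Q k - lam k • 1) *ᵥ x) + a k ⬝ᵥ x + lam k * ∑ i, X i ≤ b k)
    (hA : ∀ j, (A *ᵥ x) j ≤ bA j)
    (hXI : ∀ i ∈ I, X i = x i)
    (hXlo : ∀ i ∉ I, 0 ≤ X i)
    (hXhi : ∀ i ∉ I, X i ≤ u i * x i)
    (hx0 : ∀ i, 0 ≤ x i) (hxu : ∀ i, x i ≤ u i)
    -- the fixed matrix X̄:
    (Xb : Fin n → ℝ) (hXb : Xb = fun i => if i ∈ I then X i else u i * x i) :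
    -- (x, X̄) is feasible:
    ((∀ k, k ≠ 0 →
      x ⬝ᵥ ((Q k - lam k • 1) *ᵥ x) + a k ⬝ᵥ x + lam k * ∑ i, Xb i ≤ b k) ∧
     (∀ j, (A *ᵥ x) j ≤ bA j) ∧
     (∀ i ∈ I, Xb i = x i) ∧ (∀ i ∉ I, 0 ≤ Xb i) ∧ (∀ i ∉ I, Xb i ≤ u i * x i)) ∧
    -- and its objective value is no greater:
    x ⬝ᵥ ((Q 0 - lam 0 • 1) *ᵥ x) + a 0 ⬝ᵥ x + b 0 + lam 0 * ∑ i, Xb i ≤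
      x ⬝ᵥ ((Q 0 - lam 0 • 1) *ᵥ x) + a 0 ⬝ᵥ x + b 0 + lam 0 * ∑ i, X i := by
  have hle : ∀ i, X i ≤ Xb i := by
    intro i
    rw [hXb]
    by_cases h : i ∈ I
    · simp [h]
    · simp only [h, if_false]
      exact hXhi i h
  have hsum : ∑ i, X i ≤ ∑ i, Xb i := Finset.sum_le_sum fun i _ => hle i
  have hmul : ∀ k : Fin (m+1), lam k * ∑ i, Xb i ≤ lam k * ∑ i, X i :=
    fun k => mul_le_mul_of_nonpos_left hsum (hlam k)
  refine ⟨⟨fun k hk => le_trans (by linarith [hmul k]) (hq k hk), hA,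
    fun i hi => by simp [hXb, hi, hXI i hi],
    fun i hi => by simp [hXb, hi]; exact mul_nonneg (hu i) (hx0 i),
    fun i hi => by simp [hXb, hi]⟩, by linarith [hmul 0]⟩
end

section
/- Let x̂ ∈ ℝ^n satisfy 0 ≤ x̂ ≤ u and the approximate quadratic constraints x̂^T(Q^k − λ^k I)x̂ + a_k^T x̂ + λ^k Σ_{i∈ℐ} x̂_i² + λ^k Σ_{i∉ℐ} û_i x̂_i ≤ b_k for all k = 1,…,m, with λ^k ≤ 0, where X_ii = x̂_i² for i ∈ ℐ (exact on integer coordinates). If additionally û_i ≤ x̂_i and û_i ≥ 0 for every i ∉ ℐ, then x̂ satisfies the original quadratic constraints x̂^T Q^k x̂ + a_k^T x̂ ≤ b_k for all k. -/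
open Matrix

/-- If `x̂` satisfies the approximate quadratic constraints with `λ^k ≤ 0` and
`0 ≤ û_i ≤ x̂_i` for all continuous coordinates `i ∉ ℐ`, then `x̂` satisfies the
original quadratic constraints. -/
theorem stmt_6 {n m : ℕ}
    (Q : Fin m → Matrix (Fin n) (Fin n) ℝ)
    (a : Fin m → Fin n → ℝ) (b : Fin m → ℝ)
    (lam : Fin m → ℝ) (hlam : ∀ k, lam k ≤ 0)
    (I : Finset (Fin n))
    (u uhat : Fin n → ℝ) (huhat0 : ∀ i ∉ I, 0 ≤ uhat i)
    (x : Fin n → ℝ)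
    (hx0 : ∀ i, 0 ≤ x i) (hxu : ∀ i, x i ≤ u i)
    (hub : ∀ i ∉ I, uhat i ≤ x i)
    (hq : ∀ k, x ⬝ᵥ ((Q k - lam k • 1) *ᵥ x) + a k ⬝ᵥ x
        + lam k * (∑ i ∈ I, x i ^ 2) + lam k * (∑ i ∈ Iᶜ, uhat i * x i) ≤ b k) :
    ∀ k, x ⬝ᵥ (Q k *ᵥ x) + a k ⬝ᵥ x ≤ b k := by
  intro k
  have hexp : x ⬝ᵥ ((Q k - lam k • 1) *ᵥ x)
      = x ⬝ᵥ (Q k *ᵥ x) - lam k * ∑ i, x i ^ 2 := by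
    rw [sub_mulVec, dotProduct_sub, smul_mulVec, one_mulVec,
      dotProduct_smul]
    simp [dotProduct, sq, smul_eq_mul]
  have hsplit : (∑ i, x i ^ 2) = (∑ i ∈ I, x i ^ 2) + ∑ i ∈ Iᶜ, x i ^ 2 := by
    rw [Finset.sum_add_sum_compl]
  have hcomp : lam k * (∑ i ∈ Iᶜ, x i ^ 2) ≤ lam k * ∑ i ∈ Iᶜ, uhat i * x i := by
    apply mul_le_mul_of_nonpos_left _ (hlam k)
    apply Finset.sum_le_sum
    intro i hi
    have hi' : i ∉ I := Finset.mem_compl.mp hi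
    have := mul_le_mul_of_nonneg_right (hub i hi') (hx0 i)
    simpa [sq] using this
  have hk := hq k
  rw [hexp, hsplit] at hk
  nlinarith [hcomp, hk]
end
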